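/- A complete signed graph is balanced (every triangle has an even number of negative edges, i.e., product of signs is +1) if and only if its vertex set can be partitioned into two (possibly empty) sets such that all edges within each set are positive and all edges between the sets are negative. -/
import Mathlib


/-- Harary's structure theorem: a complete signed graph (a sign `±1` on every unordered
pair of distinct vertices) is balanced — every triangle has sign product `+1` — if and
only if the vertex set can be partitioned into two (possibly empty) sets such that edges
within each set are positive and all edges between the sets are negative. -/
theorem stmt_11 {V : Type*} (sgn : V → V → ℤ)
    (hsign : ∀ u v : V, u ≠ v → sgn u v = 1 ∨ sgn u v = -1)
    (hsymm : ∀ u v : V, sgn u v = sgn v u) :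
    (∀ u v w : V, u ≠ v → u ≠ w → v ≠ w → sgn u v * sgn v w * sgn u w = 1)
    ↔ ∃ S : Set V, ∀ u v : V, u ≠ v → (sgn u v = 1 ↔ (u ∈ S ↔ v ∈ S)) := by
  classical
  constructor
  · intro hbal
    by_cases hV : Nonempty V
    · obtain ⟨v0⟩ := hV
      refine ⟨{v | v = v0 ∨ sgn v0 v = 1}, ?_⟩
      intro u v huv
      simp only [Set.mem_setOf_eq]
      by_cases hu : u = v0
      · subst hu
        have hv : ¬ v = u := fun h => huv h.symm
        constructor
        · intro h1; tauto
        · intro h1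
          rcases h1.mp (Or.inl rfl) with h | h
          · exact absurd h hv
          · exact h
      · by_cases hv : v = v0
        · subst hv
          have hs := hsymm u v
          constructor
          · intro h1
            constructor
            · intro _; exact Or.inl rfl
            · intro _; right; rw [← hs]; exact h1
          · intro h1
            rcases h1.mpr (Or.inl rfl) with h | h
            · exact absurd h hu
            · rw [hs]; exact h
        · have hb := hbal v0 u v (fun h => hu h.symm) (fun h => hv h.symm) huv
          have hiff : (u = v0 ∨ sgn v0 u = 1) ↔ sgn v0 u = 1 := by tauto
          have hiff' : (v = v0 ∨ sgn v0 v = 1) ↔ sgn v0 v = 1 := by tauto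
          rw [hiff, hiff']
          rcases hsign v0 u (fun h => hu h.symm) with h1 | h1 <;>
            rcases hsign u v huv with h2 | h2 <;>
            rcases hsign v0 v (fun h => hv h.symm) with h3 | h3 <;>
            rw [h1, h2, h3] at hb <;> norm_num at hb <;>
            simp [h1, h2, h3]
    · exact ⟨∅, fun u => absurd ⟨u⟩ hV⟩
  · rintro ⟨S, hS⟩ u v w huv huw hvw
    have h1 := hS u v huv
    have h2 := hS v w hvw
    have h3 := hS u w huw
    rcases hsign u v huv with hab | hab <;>
      rcases hsign v w hvw with hbc | hbc <;>
      rcases hsign u w huw with hac | hac <;>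
      rw [hab, hbc, hac] <;>
      rw [hab] at h1 <;> rw [hbc] at h2 <;> rw [hac] at h3 <;>
      norm_num at h1 h2 h3 ⊢ <;> tauto
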